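/- arXiv:q-alg/9504022 — 4 statements merged into one kernel-verified Lean document; each statement's English description precedes it below -/
import Mathlib

section
/- For any α ∈ C, the formal delta function satisfies z₀^{-1} δ((z₁-z₂)/z₀) · ((z₁-z₂)/z₀)^α = z₁^{-1} δ((z₀+z₂)/z₁) · ((z₀+z₂)/z₁)^{-α}, where δ(z) = ∑_{n∈Z} zⁿ and negative powers of binomials are expanded in the second variable. -/
open scoped Classical

/-- The generalized binomial coefficient `C(x, k) = x(x-1)⋯(x-k+1)/k!` for `x ∈ ℂ`. -/
noncomputable def cchoose (x : ℂ) (k : ℕ) : ℂ :=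
  (∏ i ∈ Finset.range k, (x - i)) / (Nat.factorial k : ℂ)

lemma cchoose_reflect (x : ℂ) (r : ℕ) :
    cchoose ((r : ℂ) - 1 - x) r = (-1 : ℂ) ^ r * cchoose x r := by
  unfold cchoose
  rw [← mul_div_assoc]
  congr 1
  have h1 : ∏ i ∈ Finset.range r, ((r : ℂ) - 1 - x - i)
      = ∏ i ∈ Finset.range r, (-(x - ((r - 1 - i : ℕ) : ℂ))) := by
    apply Finset.prod_congr rfl
    intro i hi
    have hi' : i < r := Finset.mem_range.mp hi
    have hc : ((r - 1 - i : ℕ) : ℂ) = (r : ℂ) - 1 - i := by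
      have h : r - 1 - i + (i + 1) = r := by omega
      have := congrArg (Nat.cast : ℕ → ℂ) h
      push_cast at this
      linear_combination this
    rw [hc]; ring
  rw [h1]
  have h2 : ∏ i ∈ Finset.range r, (-(x - ((r - 1 - i : ℕ) : ℂ)))
      = (-1 : ℂ) ^ r * ∏ i ∈ Finset.range r, (x - ((r - 1 - i : ℕ) : ℂ)) := by
    have : ∀ i ∈ Finset.range r, (-(x - ((r - 1 - i : ℕ) : ℂ)))
        = (-1 : ℂ) * (x - ((r - 1 - i : ℕ) : ℂ)) := fun i _ => by ring
    rw [Finset.prod_congr rfl this, Finset.prod_mul_distrib, Finset.prod_const,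
      Finset.card_range]
  rw [h2, Finset.prod_range_reflect (fun i => x - (i : ℂ)) r]

/-- `z₀⁻¹ δ((z₁-z₂)/z₀) ((z₁-z₂)/z₀)^α
      = z₁⁻¹ δ((z₀+z₂)/z₁) ((z₀+z₂)/z₁)^{-α}`.
The left side is `∑_{n∈ℤ} ∑_{r∈ℕ} (-1)^r C(n+α,r) z₀^{-n-α-1} z₁^{n+α-r} z₂^r`,
the right side is `∑_{m∈ℤ} ∑_{r∈ℕ} C(m-α,r) z₀^{m-α-r} z₁^{-m+α-1} z₂^r`
(binomials expanded in nonnegative powers of the second listed variable).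
Equality means: for every monomial `z₀^p z₁^q z₂^r` (`p, q ∈ ℂ`, `r ∈ ℕ`)
the total coefficients agree. -/
theorem stmt2 (α : ℂ) :
    ∀ (p q : ℂ) (r : ℕ),
      (∑ᶠ n : ℤ, if p = -(n : ℂ) - α - 1 ∧ q = (n : ℂ) + α - r
          then (-1 : ℂ) ^ r * cchoose ((n : ℂ) + α) r else 0)
        = ∑ᶠ m : ℤ, if p = (m : ℂ) - α - r ∧ q = -(m : ℂ) + α - 1
          then cchoose ((m : ℂ) - α) r else 0 := by
  intro p q r
  set g : ℤ → ℂ := fun m => if p = (m : ℂ) - α - r ∧ q = -(m : ℂ) + α - 1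
      then cchoose ((m : ℂ) - α) r else 0 with hg
  have key : ∀ n : ℤ,
      (if p = -(n : ℂ) - α - 1 ∧ q = (n : ℂ) + α - r
          then (-1 : ℂ) ^ r * cchoose ((n : ℂ) + α) r else 0)
        = g ((r : ℤ) - n - 1) := by
    intro n
    have hm : (((r : ℤ) - n - 1 : ℤ) : ℂ) = (r : ℂ) - n - 1 := by
      push_cast; ring
    rw [hg]
    simp only [hm]
    have hc1 : ((r : ℂ) - n - 1 - α - r) = -(n : ℂ) - α - 1 := by ring
    have hc2 : (-((r : ℂ) - n - 1) + α - 1) = (n : ℂ) + α - r := by ring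
    rw [hc1, hc2]
    rcases Classical.em (p = -(n : ℂ) - α - 1 ∧ q = (n : ℂ) + α - r) with h | h
    · rw [if_pos h, if_pos h]
      have : (r : ℂ) - n - 1 - α = (r : ℂ) - 1 - ((n : ℂ) + α) := by ring
      rw [this, cchoose_reflect]
    · rw [if_neg h, if_neg h]
  calc (∑ᶠ n : ℤ, if p = -(n : ℂ) - α - 1 ∧ q = (n : ℂ) + α - r
          then (-1 : ℂ) ^ r * cchoose ((n : ℂ) + α) r else 0)
      = ∑ᶠ n : ℤ, g (((⟨fun n => (r : ℤ) - n - 1, fun m => (r : ℤ) - m - 1,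
          fun n => by ring, fun m => by ring⟩ : ℤ ≃ ℤ)) n) := finsum_congr key
    _ = ∑ᶠ m : ℤ, g m := finsum_comp_equiv _
end

section
/- If f(z₁,z₂) ∈ V[[z₁,z₁^{-1}]]((z₂)), then δ((z₀+z₂)/z₁) · f(z₁,z₂) = δ((z₀+z₂)/z₁) · f(z₀+z₂, z₂), where f(z₀+z₂,z₂) is obtained by formally substituting z₀+z₂ for z₁ with (z₀+z₂)^n expanded in nonnegative powers of z₂. -/
open Finset

theorem cchoose_eq_ringChoose (x : ℂ) (k : ℕ) : cchoose x k = Ring.choose x k := by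
  rw [Ring.choose_eq_smul, ← Polynomial.aeval_eq_smeval, Polynomial.aeval_def,
    Polynomial.eval₂_eq_eval_map, descPochhammer_map, descPochhammer_eval_eq_prod_range,
    cchoose, smul_eq_mul, div_eq_inv_mul]

theorem cchoose_add (x y : ℂ) (n : ℕ) :
    cchoose (x + y) n = ∑ p ∈ antidiagonal n, cchoose x p.1 * cchoose y p.2 := by
  simp only [cchoose_eq_ringChoose]
  exact Ring.add_choose_eq n (Commute.all x y)

theorem finsum_eq_finsum_sum_antidiagonal {A β : Type*} [AddMonoid A] [HasAntidiagonal A]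
    [AddCommMonoid β] {g : A × A → β} (hg : Function.HasFiniteSupport g) :
    ∑ᶠ p, g p = ∑ᶠ n, ∑ p ∈ antidiagonal n, g p := by
  classical
  set s := hg.toFinset
  set t := s.image fun p => p.1 + p.2
  have hfiber (n : A) : ∑ p ∈ s with p.1 + p.2 = n, g p = ∑ p ∈ antidiagonal n, g p := by
    refine sum_subset (fun p hp => mem_antidiagonal.2 (mem_filter.1 hp).2) fun p hpn hps => ?_
    by_contra h
    exact hps (mem_filter.2 ⟨hg.mem_toFinset.2 h, mem_antidiagonal.1 hpn⟩)
  have hsupport : (Function.support fun n => ∑ p ∈ antidiagonal n, g p) ⊆ t := by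
    intro n hn
    rw [Function.mem_support, ← hfiber] at hn
    obtain ⟨p, hp, -⟩ := exists_ne_zero_of_sum_ne_zero hn
    exact mem_image.2 ⟨p, (mem_filter.1 hp).1, (mem_filter.1 hp).2⟩
  rw [finsum_eq_sum_of_support_subset g (s := s) fun p hp => hg.mem_toFinset.2 hp,
    ← sum_fiberwise_of_maps_to (t := t) fun p hp => mem_image_of_mem _ hp,
    finsum_eq_sum_of_support_subset _ hsupport]
  exact sum_congr rfl fun n _ => hfiber n

theorem sum_antidiagonal_cchoose_smul {V : Type*} [AddCommGroup V] [Module ℂ V]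
    (f : ℤ → ℤ → V) (a b c : ℤ) (n : ℕ) :
    ∑ p ∈ antidiagonal n,
        (cchoose ((-b : ℤ) : ℂ) p.1 * cchoose ((a + b + p.1 + p.2 : ℤ) : ℂ) p.2) •
          f (a + b + p.1 + p.2) (c - p.1 - p.2) =
      cchoose ((a + n : ℤ) : ℂ) n • f (b + a + n) (c - n) := by
  have hterm : ∀ p ∈ antidiagonal n,
      (cchoose ((-b : ℤ) : ℂ) p.1 * cchoose ((a + b + p.1 + p.2 : ℤ) : ℂ) p.2) •
          f (a + b + p.1 + p.2) (c - p.1 - p.2) =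
        (cchoose ((-b : ℤ) : ℂ) p.1 * cchoose ((a + b + n : ℤ) : ℂ) p.2) •
          f (b + a + n) (c - n) := by
    intro p hp
    have hpn : (p.1 : ℤ) + p.2 = n := by exact_mod_cast mem_antidiagonal.1 hp
    rw [show a + b + p.1 + p.2 = a + b + n by omega, show c - p.1 - p.2 = c - n by omega,
      add_comm b a]
  rw [sum_congr rfl hterm, ← sum_smul, ← cchoose_add]
  congr 2
  push_cast
  ring

/-- [FLM] Lemma 2.1: for `f(z₁,z₂) ∈ V[[z₁,z₁⁻¹]]((z₂))`,
`δ((z₀+z₂)/z₁) f(z₁,z₂) = δ((z₀+z₂)/z₁) f(z₀+z₂, z₂)`.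
Here `f` is given by its coefficients `f i j` of `z₁^i z₂^j`, truncated below in `z₂`;
`δ((z₀+z₂)/z₁) = ∑_{n∈ℤ} ∑_{k∈ℕ} C(n,k) z₀^{n-k} z₂^k z₁^{-n}` and in `f(z₀+z₂,z₂)`
each `(z₀+z₂)^i` is expanded in nonnegative powers of `z₂`.  Equality is asserted
for the coefficient of every monomial `z₀^a z₁^b z₂^c`. -/
theorem stmt3 (V : Type*) [AddCommGroup V] [Module ℂ V]
    (f : ℤ → ℤ → V)
    (htrunc : ∃ N : ℤ, ∀ i j : ℤ, j < N → f i j = 0) :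
    ∀ a b c : ℤ,
      (∑ᶠ k : ℕ, cchoose ((a + k : ℤ) : ℂ) k • f (b + a + k) (c - k))
        = ∑ᶠ k : ℕ, ∑ᶠ m : ℕ,
            (cchoose ((-b : ℤ) : ℂ) k * cchoose ((a + b + k + m : ℤ) : ℂ) m) •
              f (a + b + k + m) (c - k - m) := by
  obtain ⟨N, hN⟩ := htrunc
  intro a b c
  set g : ℕ × ℕ → V := fun p =>
    (cchoose ((-b : ℤ) : ℂ) p.1 * cchoose ((a + b + p.1 + p.2 : ℤ) : ℂ) p.2) •
      f (a + b + p.1 + p.2) (c - p.1 - p.2)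
  have hg : Function.HasFiniteSupport g := by
    refine (Set.finite_Iic ((c - N).toNat, (c - N).toNat)).subset fun p hp => ?_
    have hpN : N ≤ c - p.1 - p.2 := by
      by_contra! h
      exact hp (by simp [g, hN _ _ h])
    rw [Set.mem_Iic, Prod.le_def]
    omega
  symm
  calc ∑ᶠ k : ℕ, ∑ᶠ m : ℕ, g (k, m) = ∑ᶠ p, g p := (finsum_curry g hg).symm
    _ = ∑ᶠ n, ∑ p ∈ antidiagonal n, g p := finsum_eq_finsum_sum_antidiagonal hg
    _ = _ := finsum_congr (sum_antidiagonal_cchoose_smul f a b c)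
end

section
/- Linear independence of delta function derivatives: let V be a vector space, α, β rational numbers, g(z₁,z₂) = z₂^{-1}δ(z₁/z₂)(z₁/z₂)^α, and f₀(z₂),…,fₙ(z₂) ∈ V((z₂^β)). If g(z₁,z₂)f₀(z₂) + (∂_{z₂}g)(z₁,z₂)f₁(z₂) + ⋯ + (∂_{z₂}^n g)(z₁,z₂)fₙ(z₂) = 0, then fⱼ(z₂) = 0 for all j = 0,…,n. -/
open scoped Classical

/-- Coefficient of `z₁^p z₂^q` in `g(z₁,z₂) = z₂⁻¹ δ(z₁/z₂)(z₁/z₂)^α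
    = ∑_{n∈ℤ} z₁^{n+α} z₂^{-n-α-1}`. -/
noncomputable def gcoef (α p q : ℚ) : ℂ :=
  if (∃ n : ℤ, p = (n : ℚ) + α) ∧ q = -p - 1 then 1 else 0

open Polynomial in
/-- Key linear-algebra lemma: the family of coefficient functions
`m ↦ ∏_{i<j} (i - j - (γ+m))` is "linearly independent", so vectors paired with it
must vanish. -/
lemma stmt7_key (V : Type*) [AddCommGroup V] [Module ℂ V] (n : ℕ) (v : ℕ → V) (γ : ℂ)
    (h : ∀ m : ℤ, ∑ j ∈ Finset.range (n + 1),
        (∏ i ∈ Finset.range j, ((i : ℂ) - j - (γ + m))) • v j = 0) :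
    ∀ j ≤ n, v j = 0 := by
  set Q : ℕ → ℂ[X] := fun j => ∏ i ∈ Finset.range j, (Polynomial.C ((i : ℂ) - j) - X)
    with hQdef
  have hfacne : ∀ (a : ℂ), (Polynomial.C a - X) ≠ (0 : ℂ[X]) := by
    intro a hc
    have : (Polynomial.C a - X).coeff 1 = 0 := by rw [hc]; simp
    simp at this
  have hfacdeg : ∀ (a : ℂ), (Polynomial.C a - X).natDegree = 1 := by
    intro a
    have : (Polynomial.C a - X) = -(X - Polynomial.C a) := by ring
    rw [this, natDegree_neg, natDegree_X_sub_C]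
  have hfaclead : ∀ (a : ℂ), (Polynomial.C a - X).leadingCoeff = -1 := by
    intro a
    have : (Polynomial.C a - X) = -(X - Polynomial.C a) := by ring
    rw [this, leadingCoeff_neg, (monic_X_sub_C a).leadingCoeff]
  have hQdeg : ∀ j, (Q j).natDegree = j := by
    intro j
    rw [hQdef]
    rw [Polynomial.natDegree_prod _ _ (fun i _ => hfacne _)]
    simp only [hfacdeg]
    simp
  have hQlead : ∀ j, (Q j).coeff j = (-1 : ℂ) ^ j := by
    intro j
    have : (Q j).coeff j = (Q j).leadingCoeff := by
      rw [Polynomial.leadingCoeff, hQdeg]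
    rw [this, hQdef, Polynomial.leadingCoeff_prod]
    simp only [hfaclead]
    simp
  have hQeval : ∀ j (z : ℂ), (Q j).eval z = ∏ i ∈ Finset.range j, ((i : ℂ) - j - z) := by
    intro j z
    rw [hQdef, eval_prod]
    simp [sub_sub]
  intro j hj
  rw [← Module.forall_dual_apply_eq_zero_iff ℂ]
  intro φ
  set a : ℕ → ℂ := fun j => φ (v j) with ha
  set P : ℂ[X] := ∑ j ∈ Finset.range (n + 1), Polynomial.C (a j) * Q j with hP
  have hPeval : ∀ m : ℤ, P.eval (γ + m) = 0 := by
    intro m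
    have h2 := congrArg φ (h m)
    rw [map_sum, map_zero] at h2
    rw [hP, eval_finset_sum]
    rw [← h2]
    refine Finset.sum_congr rfl fun j _ => ?_
    rw [map_smul, eval_mul, eval_C, hQeval, smul_eq_mul, mul_comm]
  have hP0 : P = 0 := by
    apply Polynomial.eq_zero_of_infinite_isRoot
    apply Set.infinite_of_injective_forall_mem (f := fun m : ℤ => γ + (m : ℂ))
    · intro x y hxy
      simp only [add_right_inj] at hxy
      exact_mod_cast hxy
    · intro m
      exact hPeval m
  have hcoeff : ∀ k, ∑ j ∈ Finset.range (n + 1), a j * (Q j).coeff k = 0 := by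
    intro k
    have : P.coeff k = 0 := by rw [hP0]; simp
    rw [hP, Polynomial.finset_sum_coeff] at this
    simpa [Polynomial.coeff_C_mul] using this
  have main : ∀ d k, k ≤ n → n - k = d → a k = 0 := by
    intro d
    induction d using Nat.strong_induction_on with
    | _ d ih =>
      intro k hk hd
      have hsum := hcoeff k
      rw [Finset.sum_eq_single_of_mem k (Finset.mem_range.mpr (Nat.lt_succ_of_le hk))] at hsum
      · rw [hQlead] at hsum
        have : ((-1 : ℂ) ^ k) ≠ 0 := by
          simp
        exact (mul_eq_zero.mp hsum).resolve_right this
      · intro b hb hbk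
        rcases lt_or_gt_of_ne hbk with hlt | hgt
        · -- b < k : coeff k of Q b is 0
          rw [Polynomial.coeff_eq_zero_of_natDegree_lt (by rw [hQdeg]; exact hlt), mul_zero]
        · -- b > k : a b = 0 by ih
          have hbn : b ≤ n := Nat.lt_succ_iff.mp (Finset.mem_range.mp hb)
          have : n - b < d := by omega
          rw [ih _ this b hbn rfl, zero_mul]
  exact main (n - j) j hj rfl

/-- Lemma 2.3: linear independence of the derivatives of the delta
function.  Let `α, β ∈ ℚ`, and let `f₀,…,fₙ ∈ V((z₂^β))` (supports in `βℤ`, bounded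
below).  If `∑_{j=0}^n (∂_{z₂}^j g)(z₁,z₂) f_j(z₂) = 0`, i.e. every coefficient
of `z₁^p z₂^q` of the sum vanishes (the coefficient of `z₁^p z₂^s` in `∂_{z₂}^j g`
being `(∏_{i<j}(s+i+1))·gcoef α p (s+j)`), then all `f_j = 0`. -/
theorem stmt7 (V : Type*) [AddCommGroup V] [Module ℂ V]
    (α β : ℚ) (n : ℕ) (f : ℕ → ℚ → V)
    (hsupp : ∀ j ≤ n, ∀ q : ℚ, f j q ≠ 0 → ∃ m : ℤ, q = (m : ℚ) * β)
    (htrunc : ∀ j ≤ n, ∃ N : ℚ, ∀ q < N, f j q = 0)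
    (hzero : ∀ p q : ℚ,
      ∑ j ∈ Finset.range (n + 1),
        (∑ᶠ s : ℚ,
          ((∏ i ∈ Finset.range j, ((s + i + 1 : ℚ) : ℂ)) * gcoef α p (s + j)) • f j (q - s))
        = 0) :
    ∀ j ≤ n, ∀ q : ℚ, f j q = 0 := by
  intro j0 hj0 q0
  have hkey : ∀ (r : ℚ) (m : ℤ), ∑ j ∈ Finset.range (n + 1),
      (∏ i ∈ Finset.range j, ((i : ℂ) - j - ((α : ℂ) + m))) • f j (r + j) = 0 := by
    intro r m
    have h := hzero (α + m) (r - (α + m) - 1)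
    rw [← h]
    refine Finset.sum_congr rfl fun j _ => ?_
    rw [finsum_eq_single _ (-(α + (m : ℚ)) - 1 - j)]
    · have hg : gcoef α (α + m) ((-(α + (m : ℚ)) - 1 - j) + j) = 1 := by
        rw [gcoef, if_pos]
        constructor
        · exact ⟨m, by ring⟩
        · ring
      rw [hg, mul_one]
      have harg : (r - (α + m) - 1) - (-(α + (m : ℚ)) - 1 - j) = r + j := by ring
      rw [harg]
      congr 1
      refine Finset.prod_congr rfl fun i _ => ?_
      push_cast
      ring
    · intro x hx
      have hg0 : gcoef α (α + m) (x + j) = 0 := by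
        rw [gcoef, if_neg]
        rintro ⟨-, h2⟩
        apply hx
        have : x + (j : ℚ) = -(α + m) - 1 := h2
        linarith
      rw [hg0, mul_zero, zero_smul]
  have := stmt7_key V n (fun j => f j ((q0 - j0) + j)) (α : ℂ) (hkey (q0 - j0)) j0 hj0
  simpa using this
end

section
/- The vacuum/creation properties in a local system of twisted vertex operators: for the identity operator I(z) = Id_M and any twisted vertex operator a(z) in a local system A of Z_T-twisted vertex operators on M, Y_A(I(z), z₀) a(z) = a(z) and Y_A(a(z), z₀) I(z) = e^{z₀ ∂/∂z} a(z) = a(z+z₀), where a(z+z₀) is expanded in nonnegative powers of z₀. -/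
/-- The `n`-th twisted product `a(z)ₙ b(z)` of `ℤ_T`-twisted vertex operators,
for `a(z) ∈ F(M,T)^j`, written coefficientwise.  `A q` (resp. `B q`) is the
coefficient of `z^q` in `a(z)` (resp. `b(z)`), and the coefficient of `z^q` in
`a(z)ₙ b(z) = Res_{z₁}Res_{z₀} ((z₁-z₀)/z)^{j/T} z₀ⁿ
  [z₀⁻¹δ((z₁-z)/z₀) a(z₁)b(z) - ε z₀⁻¹δ((z-z₁)/(-z₀)) b(z)a(z₁)]`
is obtained by expanding `((z₁-z₀)/z)^{j/T} = ∑_i C(j/T,i)(-1)^i z₁^{j/T-i}z₀^i z^{-j/T}`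
and the delta functions, and extracting residues. -/
noncomputable def twProd (M : Type*) [AddCommGroup M] [Module ℂ M]
    (T : ℕ) (j : ℤ) (A B : ℚ → Module.End ℂ M) (ε : ℂ) (n : ℤ) :
    ℚ → Module.End ℂ M :=
  fun q =>
    ∑ᶠ i : ℕ,
      (cchoose ((j : ℂ) / (T : ℂ)) i * (-1 : ℂ) ^ i) •
        ((∑ᶠ k : ℕ, (cchoose ((n : ℂ) + (i : ℂ)) k * (-1 : ℂ) ^ k) •
            (A ((k : ℚ) - (n : ℚ) - 1 - (j : ℚ) / (T : ℚ)) *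
              B (q - (k : ℚ) + (j : ℚ) / (T : ℚ))))
          - ε • (∑ᶠ k : ℕ,
              (cchoose ((n : ℂ) + (i : ℂ)) k * (-1 : ℂ) ^ ((n : ℤ) + (i : ℤ) - (k : ℤ))) •
            (B (q - (n : ℚ) - (i : ℚ) + (k : ℚ) + (j : ℚ) / (T : ℚ)) *
              A ((i : ℚ) - (k : ℚ) - 1 - (j : ℚ) / (T : ℚ)))))

open scoped Classical

open Polynomial

lemma cchoose_zero (x : ℂ) : cchoose x 0 = 1 := by simp [cchoose]

lemma prod_range_cast (a k : ℕ) :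
    (∏ i ∈ Finset.range k, ((a : ℂ) - i)) = (a.descFactorial k : ℂ) := by
  induction k with
  | zero => simp
  | succ k ih =>
    rw [Finset.prod_range_succ, ih, Nat.descFactorial_succ]
    rcases lt_or_ge a k with h | h
    · rw [Nat.descFactorial_eq_zero_iff_lt.2 h]; simp
    · push_cast [Nat.cast_sub h]; ring

lemma cchoose_nat (a k : ℕ) : cchoose (a : ℂ) k = (a.choose k : ℂ) := by
  rw [cchoose, prod_range_cast, Nat.descFactorial_eq_factorial_mul_choose, Nat.cast_mul,
    mul_comm, mul_div_assoc, div_self (by exact_mod_cast k.factorial_ne_zero), mul_one]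

lemma cchoose_neg (x : ℂ) (k : ℕ) :
    cchoose x k = (-1 : ℂ) ^ k * cchoose ((k : ℂ) - 1 - x) k := by
  rw [cchoose, cchoose, mul_div_assoc', mul_comm ((-1:ℂ)^k)]
  congr 1
  rw [← Finset.prod_range_reflect (fun i => ((k : ℂ) - 1 - x) - i) k]
  rw [show ((-1:ℂ)^k) = ∏ _i ∈ Finset.range k, (-1:ℂ) by simp, ← Finset.prod_mul_distrib]
  apply Finset.prod_congr rfl
  intro i hi
  have hik : i < k := Finset.mem_range.1 hi
  have : ((k - 1 - i : ℕ) : ℂ) = (k : ℂ) - 1 - i := by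
    have h1 : i + 1 ≤ k := hik
    rw [Nat.sub_sub, Nat.cast_sub (by omega)]
    push_cast; ring
  rw [this]; ring

noncomputable def chPoly (k : ℕ) : Polynomial ℂ :=
  Polynomial.C ((Nat.factorial k : ℂ)⁻¹) * ∏ i ∈ Finset.range k, (Polynomial.X - Polynomial.C (i : ℂ))

lemma chPoly_eval (x : ℂ) (k : ℕ) : (chPoly k).eval x = cchoose x k := by
  simp [chPoly, cchoose, div_eq_inv_mul, Polynomial.eval_prod]

lemma nat_range_eq (p q : Polynomial ℂ) (h : ∀ n : ℕ, p.eval (n : ℂ) = q.eval (n : ℂ)) :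
    p = q := by
  apply Polynomial.eq_of_infinite_eval_eq
  apply Set.Infinite.mono (s := Set.range (Nat.cast : ℕ → ℂ))
  · rintro _ ⟨n, rfl⟩; exact h n
  · exact Set.infinite_range_of_injective Nat.cast_injective

lemma nat_vandermonde (a b N : ℕ) :
    ∑ i ∈ Finset.range (N + 1), (a.choose i : ℂ) * (b.choose (N - i) : ℂ)
      = ((a + b).choose N : ℂ) := by
  rw [Nat.add_choose_eq, Finset.Nat.sum_antidiagonal_eq_sum_range_succ_mk]
  push_cast
  rfl


lemma vandermonde_half (x : ℂ) (b N : ℕ) :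
    ∑ i ∈ Finset.range (N + 1), cchoose x i * cchoose (b : ℂ) (N - i)
      = cchoose (x + b) N := by
  have hp : (∑ i ∈ Finset.range (N + 1), chPoly i * Polynomial.C (cchoose (b : ℂ) (N - i)))
      = (chPoly N).comp (Polynomial.X + Polynomial.C (b : ℂ)) := by
    apply nat_range_eq
    intro n
    simp only [Polynomial.eval_finset_sum, Polynomial.eval_mul, Polynomial.eval_C,
      Polynomial.eval_comp, Polynomial.eval_add, Polynomial.eval_X, chPoly_eval]
    rw [show (n : ℂ) + b = ((n + b : ℕ) : ℂ) by push_cast; ring]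
    simp only [cchoose_nat]
    exact nat_vandermonde n b N
  have := congrArg (Polynomial.eval x) hp
  simpa only [Polynomial.eval_finset_sum, Polynomial.eval_mul, Polynomial.eval_C,
    Polynomial.eval_comp, Polynomial.eval_add, Polynomial.eval_X, chPoly_eval] using this

lemma cchoose_vandermonde (x y : ℂ) (N : ℕ) :
    ∑ i ∈ Finset.range (N + 1), cchoose x i * cchoose y (N - i)
      = cchoose (x + y) N := by
  have hp : (∑ i ∈ Finset.range (N + 1), Polynomial.C (cchoose x i) * chPoly (N - i))
      = (chPoly N).comp (Polynomial.C x + Polynomial.X) := by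
    apply nat_range_eq
    intro n
    simp only [Polynomial.eval_finset_sum, Polynomial.eval_mul, Polynomial.eval_C,
      Polynomial.eval_comp, Polynomial.eval_add, Polynomial.eval_X, chPoly_eval]
    exact vandermonde_half x n N
  have := congrArg (Polynomial.eval y) hp
  simpa only [Polynomial.eval_finset_sum, Polynomial.eval_mul, Polynomial.eval_C,
    Polynomial.eval_comp, Polynomial.eval_add, Polynomial.eval_X, chPoly_eval] using this

lemma cchoose_neg' (x : ℂ) (k : ℕ) :
    (-1 : ℂ) ^ k * cchoose x k = cchoose ((k : ℂ) - 1 - x) k := by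
  rw [cchoose_neg ((k : ℂ) - 1 - x) k]; ring_nf

lemma vdm2 (a b : ℂ) (N : ℕ) :
    ∑ i ∈ Finset.range (N + 1), cchoose (a + i) i * cchoose (b + (N - i : ℕ)) (N - i)
      = cchoose (a + b + N + 1) N := by
  have h : ∀ i ∈ Finset.range (N + 1),
      cchoose (a + i) i * cchoose (b + (N - i : ℕ)) (N - i)
        = (-1 : ℂ) ^ N * (cchoose (-1 - a) i * cchoose (-1 - b) (N - i)) := by
    intro i hi
    have hiN : i ≤ N := Nat.lt_succ_iff.1 (Finset.mem_range.1 hi)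
    rw [cchoose_neg (a + i) i, cchoose_neg (b + (N - i : ℕ)) (N - i)]
    have e1 : (i : ℂ) - 1 - (a + i) = -1 - a := by ring
    have e2 : ((N - i : ℕ) : ℂ) - 1 - (b + (N - i : ℕ)) = -1 - b := by ring
    rw [e1, e2, show ((-1 : ℂ) ^ i * cchoose (-1 - a) i) * ((-1 : ℂ) ^ (N - i) * cchoose (-1 - b) (N - i))
      = ((-1:ℂ)^i * (-1:ℂ)^(N-i)) * (cchoose (-1 - a) i * cchoose (-1 - b) (N - i)) by ring,
      ← pow_add, Nat.add_sub_cancel' hiN]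
  rw [Finset.sum_congr rfl h, ← Finset.mul_sum, cchoose_vandermonde,
    cchoose_neg (a + b + (N:ℂ) + 1) N]
  congr 1
  ring

lemma key1 (y : ℂ) (N M : ℕ) :
    ∑ i ∈ Finset.range (N + 1),
        cchoose y i * (-1 : ℂ) ^ i * ((-1 : ℂ) ^ M * cchoose ((i : ℂ) - N - 1) M)
      = cchoose ((M : ℂ) - y + N) N := by
  have h : ∀ i ∈ Finset.range (N + 1),
      cchoose y i * (-1 : ℂ) ^ i * ((-1 : ℂ) ^ M * cchoose ((i : ℂ) - N - 1) M)
        = cchoose ((-1 - y) + i) i * cchoose ((M : ℂ) + ((N - i : ℕ) : ℂ)) (N - i) := by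
    intro i hi
    have hiN : i ≤ N := Nat.lt_succ_iff.1 (Finset.mem_range.1 hi)
    have e4 : ((M + N - i : ℕ) : ℂ) = (M : ℂ) + ((N - i : ℕ) : ℂ) := by
      rw [Nat.cast_sub (show i ≤ M + N by omega), Nat.cast_sub hiN]
      push_cast; ring
    have e1 : cchoose ((i : ℂ) - N - 1) M
        = (-1 : ℂ) ^ M * cchoose (((M + N - i : ℕ) : ℂ)) M := by
      rw [cchoose_neg ((i : ℂ) - N - 1) M, e4]
      congr 2
      rw [Nat.cast_sub hiN]
      ring
    have e2 : cchoose (((M + N - i : ℕ) : ℂ)) M = cchoose (((M + N - i : ℕ) : ℂ)) (N - i) := by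
      rw [cchoose_nat, cchoose_nat]
      have : (M + N - i).choose (N - i) = (M + N - i).choose M := by
        rw [show N - i = (M + N - i) - M by omega]
        exact Nat.choose_symm (by omega)
      rw [this]
    have e3 : (-1 : ℂ) ^ i * cchoose y i = cchoose ((-1 - y) + i) i := by
      rw [cchoose_neg ((-1 - y) + (i:ℂ)) i]
      have : (i : ℂ) - 1 - (-1 - y + i) = y := by ring
      rw [this]
    rw [e1, e2, e4, ← e3]
    have h2 : ((-1 : ℂ) ^ M) * ((-1 : ℂ) ^ M) = 1 := by
      rw [← pow_add]; exact Even.neg_one_pow ⟨M, rfl⟩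
    calc cchoose y i * (-1:ℂ)^i * ((-1:ℂ)^M * ((-1:ℂ)^M * cchoose ((M:ℂ)+((N-i:ℕ):ℂ)) (N-i)))
        = (((-1:ℂ)^M) * ((-1:ℂ)^M)) * (((-1:ℂ)^i * cchoose y i) * cchoose ((M:ℂ)+((N-i:ℕ):ℂ)) (N-i)) := by ring
      _ = ((-1:ℂ)^i * cchoose y i) * cchoose ((M:ℂ)+((N-i:ℕ):ℂ)) (N-i) := by rw [h2, one_mul]
  rw [Finset.sum_congr rfl h, vdm2 (-1 - y) (M : ℂ) N]
  congr 1
  ring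

lemma key2 (y : ℂ) (N p : ℕ) :
    ∑ i ∈ Finset.range (N + 1), cchoose y i * (-1 : ℂ) ^ i *
        (-(if N ≤ i + p then cchoose ((i : ℂ) - N - 1) (i + p - N) * (-1 : ℂ) ^ (p + 1) else 0))
      = cchoose (-(p : ℂ) - 1 - y + (N : ℂ)) N := by
  have h : ∀ i ∈ Finset.range (N + 1),
      cchoose y i * (-1 : ℂ) ^ i *
        (-(if N ≤ i + p then cchoose ((i : ℂ) - N - 1) (i + p - N) * (-1 : ℂ) ^ (p + 1) else 0))
      = (-1 : ℂ) ^ N * (cchoose y i * cchoose ((p : ℕ) : ℂ) (N - i)) := by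
    intro i hi
    have hiN : i ≤ N := Nat.lt_succ_iff.1 (Finset.mem_range.1 hi)
    by_cases hc : N ≤ i + p
    · rw [if_pos hc]
      set k := i + p - N with hk
      have e1 : cchoose ((i : ℂ) - N - 1) k = (-1 : ℂ) ^ k * cchoose ((p : ℕ) : ℂ) k := by
        rw [cchoose_neg ((i : ℂ) - N - 1) k]
        congr 2
        rw [hk, Nat.cast_sub hc]
        push_cast; ring
      have e2 : cchoose ((p : ℕ) : ℂ) k = cchoose ((p : ℕ) : ℂ) (N - i) := by
        rw [cchoose_nat, cchoose_nat]
        have : p.choose (N - i) = p.choose k := by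
          rw [show N - i = p - k by omega]
          exact Nat.choose_symm (by omega)
        rw [this]
      rw [e1, e2]
      have hsgn : (-1 : ℂ) ^ i * (-1 : ℂ) ^ k * (-1 : ℂ) ^ (p + 1) * (-1) = (-1 : ℂ) ^ N := by
        rw [← pow_add, ← pow_add, ← pow_succ,
          show i + k + (p + 1) + 1 = N + 2 * (k + 1) by omega, pow_add, pow_mul]
        norm_num
      calc cchoose y i * (-1 : ℂ) ^ i *
            (-((-1 : ℂ) ^ k * cchoose ((p : ℕ) : ℂ) (N - i) * (-1 : ℂ) ^ (p + 1)))
          = ((-1 : ℂ) ^ i * (-1 : ℂ) ^ k * (-1 : ℂ) ^ (p + 1) * (-1)) *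
              (cchoose y i * cchoose ((p : ℕ) : ℂ) (N - i)) := by ring
        _ = _ := by rw [hsgn]
    · rw [if_neg hc]
      have : cchoose ((p : ℕ) : ℂ) (N - i) = 0 := by
        rw [cchoose_nat, Nat.choose_eq_zero_of_lt (by omega)]
        exact Nat.cast_zero
      rw [this]
      ring
  rw [Finset.sum_congr rfl h, ← Finset.mul_sum, cchoose_vandermonde y ((p : ℕ) : ℂ) N,
    cchoose_neg' (y + p) N]
  congr 1
  ring

/-- Lemma 3.10: vacuum and creation properties in a local system
of `ℤ_T`-twisted vertex operators.  Let `I(z) = Id_M` (coefficient family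
`IOp q = δ_{q,0}·1`) and let `a(z)` be a twisted vertex operator lying in the
`σ`-eigenspace `F(M,T)^j`.  Then `Y_A(I(z),z₀) a(z) = a(z)`, i.e.
`I(z)ₙ a(z) = δ_{n,-1} a(z)`, and
`Y_A(a(z),z₀) I(z) = e^{z₀ ∂/∂z} a(z) = a(z+z₀)`, i.e. for `n ≤ -1`,
`a(z)ₙ I(z)` has coefficient `C(q-n-1, -n-1) • A(q-n-1)` at `z^q` (the binomial
expansion of `(z+z₀)^{q-n-1}` in nonnegative powers of `z₀`), and
`a(z)ₙ I(z) = 0` for `n ≥ 0`.  (`ε_{a,I} = ε_{I,a} = 1` since `I(z)` is even.) -/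
theorem stmt14 (M : Type*) [AddCommGroup M] [Module ℂ M]
    (T : ℕ) (hT : 0 < T) (j : ℤ) (A : ℚ → Module.End ℂ M)
    (hAsupp : ∀ q : ℚ, A q ≠ 0 → ∃ m : ℤ, q + (j : ℚ) / (T : ℚ) = (m : ℚ))
    (hAtr : ∀ u : M, ∃ N : ℚ, ∀ q < N, A q u = 0)
    (IOp : ℚ → Module.End ℂ M) (hI : IOp = fun q => if q = 0 then 1 else 0) :
    (∀ (n : ℤ) (q : ℚ),
        twProd M T 0 IOp A 1 n q = if n = -1 then A q else 0) ∧
    (∀ (n : ℤ) (q : ℚ),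
        twProd M T j A IOp 1 n q
          = if n < 0 then cchoose ((q : ℂ) - (n : ℂ) - 1) (-n - 1).toNat • A (q - n - 1)
            else 0) := by
  constructor
  ·
    have hIOp0 : IOp 0 = 1 := by rw [hI]; simp
    have hIOpne : ∀ r : ℚ, r ≠ 0 → IOp r = 0 := by intro r hr; rw [hI]; simp [hr]
    intro n q
    rw [twProd]
    refine (finsum_eq_single _ 0 ?_).trans ?_
    · intro i hi
      have h0 : cchoose (((0:ℤ) : ℂ) / (T : ℂ)) i = 0 := by
        rw [show ((0:ℤ) : ℂ) / (T : ℂ) = ((0:ℕ) : ℂ) by norm_num, cchoose_nat,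
          Nat.choose_eq_zero_of_lt (Nat.pos_of_ne_zero hi), Nat.cast_zero]
      rw [h0, zero_mul, zero_smul]
    · simp only [Nat.cast_zero, Int.cast_zero, zero_div, add_zero, sub_zero, zero_sub, pow_zero,
        one_mul, one_smul, cchoose_zero]
      have hS2 : (∑ᶠ k : ℕ, (cchoose ((n:ℂ)) k * (-1:ℂ) ^ ((n:ℤ) - (k:ℤ))) •
          (A (q - (n:ℚ) + (k:ℚ)) * IOp (-(k:ℚ) - 1))) = 0 := by
        apply finsum_eq_zero_of_forall_eq_zero
        intro k
        have : (-(k:ℚ) - 1) ≠ 0 := by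
          intro h
          have : (k:ℚ) = -1 := by linarith
          have : (0:ℚ) ≤ (k:ℚ) := by positivity
          linarith
        rw [hIOpne _ this, mul_zero, smul_zero]
      rw [hS2, sub_zero]
      by_cases hn : n = -1
      · subst hn
        rw [if_pos rfl]
        refine (finsum_eq_single _ 0 ?_).trans ?_
        · intro k hk
          have : ((k:ℚ) - ((-1:ℤ):ℚ) - 1) ≠ 0 := by
            push_cast
            intro h
            exact hk (by exact_mod_cast (by linarith : (k:ℚ) = 0))
          rw [hIOpne _ this, zero_mul, smul_zero]
        · have e : ((0:ℕ):ℚ) - ((-1:ℤ):ℚ) - 1 = 0 := by push_cast; ring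
          rw [e, hIOp0, one_mul, Nat.cast_zero, sub_zero, pow_zero, mul_one, cchoose_zero, one_smul]
      · rw [if_neg hn]
        refine (finsum_eq_zero_of_forall_eq_zero ?_)
        intro k
        by_cases hk : ((k:ℚ) - (n:ℚ) - 1) = 0
        · have hkn : (k:ℤ) = n + 1 := by exact_mod_cast (by linarith : (k:ℚ) = (n:ℚ) + 1)
          have hn0 : 0 ≤ n := by omega
          have h1 : (n:ℂ) = ((n.toNat:ℕ) : ℂ) := by
            exact_mod_cast (congrArg (Int.cast : ℤ → ℂ) (Int.toNat_of_nonneg hn0)).symm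
          have hk2 : k = n.toNat + 1 := by omega
          have : cchoose ((n:ℂ)) k = 0 := by
            rw [h1, cchoose_nat, hk2, Nat.choose_eq_zero_of_lt (by omega), Nat.cast_zero]
          rw [this, zero_mul, zero_smul]
        · rw [hIOpne _ hk, zero_mul, smul_zero]
  ·
    have hIOp0 : IOp 0 = 1 := by rw [hI]; simp
    have hIOpne : ∀ r' : ℚ, r' ≠ 0 → IOp r' = 0 := by intro r' hr'; rw [hI]; simp [hr']
    intro n q
    rw [twProd]
    set r : ℚ := (j : ℚ) / (T : ℚ) with hrdef
    set y : ℂ := (j : ℂ) / (T : ℂ) with hydef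
    by_cases hu : A (q - (n:ℚ) - 1) = 0
    · refine (finsum_eq_zero_of_forall_eq_zero ?_).trans ?_
      · intro i
        have h1 : ∀ k : ℕ, (cchoose ((n:ℂ) + (i:ℂ)) k * (-1:ℂ) ^ k) •
            (A ((k:ℚ) - (n:ℚ) - 1 - r) * IOp (q - (k:ℚ) + r)) = 0 := by
          intro k
          by_cases h : q - (k:ℚ) + r = 0
          · have e : (k:ℚ) - (n:ℚ) - 1 - r = q - (n:ℚ) - 1 := by linarith
            rw [e, hu, zero_mul, smul_zero]
          · rw [hIOpne _ h, mul_zero, smul_zero]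
        have h2 : ∀ k : ℕ, (cchoose ((n:ℂ) + (i:ℂ)) k * (-1:ℂ) ^ ((n:ℤ) + (i:ℤ) - (k:ℤ))) •
            (IOp (q - (n:ℚ) - (i:ℚ) + (k:ℚ) + r) * A ((i:ℚ) - (k:ℚ) - 1 - r)) = 0 := by
          intro k
          by_cases h : q - (n:ℚ) - (i:ℚ) + (k:ℚ) + r = 0
          · have e : (i:ℚ) - (k:ℚ) - 1 - r = q - (n:ℚ) - 1 := by linarith
            rw [e, hu, mul_zero, smul_zero]
          · rw [hIOpne _ h, zero_mul, smul_zero]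
        rw [finsum_eq_zero_of_forall_eq_zero h1, finsum_eq_zero_of_forall_eq_zero h2]
        simp
      · split_ifs <;> simp [hu]
    · obtain ⟨m', hm'⟩ := hAsupp _ hu
      set m : ℤ := m' + n + 1 with hmdef
      have hm : q + r = (m:ℚ) := by
        have : ((m' + n + 1 : ℤ) : ℚ) = (m':ℚ) + (n:ℚ) + 1 := by push_cast; ring
        rw [hmdef, this]
        linarith
      set u := A (q - (n:ℚ) - 1) with hudef
      -- inner sum computations
      have hS1 : ∀ i : ℕ, (∑ᶠ k : ℕ, (cchoose ((n:ℂ) + (i:ℂ)) k * (-1:ℂ) ^ k) •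
            (A ((k:ℚ) - (n:ℚ) - 1 - r) * IOp (q - (k:ℚ) + r)))
          = if 0 ≤ m then (cchoose ((n:ℂ) + (i:ℂ)) m.toNat * (-1:ℂ) ^ (m:ℤ)) • u else 0 := by
        intro i
        by_cases h0 : 0 ≤ m
        · rw [if_pos h0]
          refine (finsum_eq_single _ m.toNat ?_).trans ?_
          · intro k hk
            have : q - (k:ℚ) + r ≠ 0 := by
              intro h
              apply hk
              have h1 : (k:ℚ) = (m:ℚ) := by linarith
              have h2 : (k:ℤ) = m := by exact_mod_cast h1
              omega
            rw [hIOpne _ this, mul_zero, smul_zero]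
          · have e1 : ((m.toNat : ℕ) : ℚ) = (m:ℚ) := by exact_mod_cast Int.toNat_of_nonneg h0
            have e2 : q - (m.toNat:ℚ) + r = 0 := by rw [e1]; linarith
            have e3 : (m.toNat:ℚ) - (n:ℚ) - 1 - r = q - (n:ℚ) - 1 := by rw [e1]; linarith
            have epow : ((-1:ℂ)) ^ (m:ℤ) = ((-1:ℂ)) ^ (m.toNat) := by
              conv_lhs => rw [← Int.toNat_of_nonneg h0]
              exact zpow_natCast _ _
            rw [e2, e3, hIOp0, mul_one, epow, ← hudef]
        · rw [if_neg h0]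
          apply finsum_eq_zero_of_forall_eq_zero
          intro k
          have : q - (k:ℚ) + r ≠ 0 := by
            intro h
            have h1 : (k:ℚ) = (m:ℚ) := by linarith
            have h2 : (k:ℤ) = m := by exact_mod_cast h1
            omega
          rw [hIOpne _ this, mul_zero, smul_zero]
      have hS2 : ∀ i : ℕ, (∑ᶠ k : ℕ, (cchoose ((n:ℂ) + (i:ℂ)) k * (-1:ℂ) ^ ((n:ℤ) + (i:ℤ) - (k:ℤ))) •
            (IOp (q - (n:ℚ) - (i:ℚ) + (k:ℚ) + r) * A ((i:ℚ) - (k:ℚ) - 1 - r)))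
          = if 0 ≤ n + (i:ℤ) - m then
              (cchoose ((n:ℂ) + (i:ℂ)) (n + (i:ℤ) - m).toNat * (-1:ℂ) ^ (m:ℤ)) • u else 0 := by
        intro i
        by_cases h0 : 0 ≤ n + (i:ℤ) - m
        · rw [if_pos h0]
          refine (finsum_eq_single _ (n + (i:ℤ) - m).toNat ?_).trans ?_
          · intro k hk
            have : q - (n:ℚ) - (i:ℚ) + (k:ℚ) + r ≠ 0 := by
              intro h
              apply hk
              have h1 : (k:ℚ) = (n:ℚ) + (i:ℚ) - (m:ℚ) := by push_cast; linarith
              have h2 : (k:ℤ) = n + (i:ℤ) - m := by exact_mod_cast h1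
              omega
            rw [hIOpne _ this, zero_mul, smul_zero]
          · have e1 : (((n + (i:ℤ) - m).toNat : ℕ) : ℚ) = (n:ℚ) + (i:ℚ) - (m:ℚ) := by
              rw [show (((n + (i:ℤ) - m).toNat : ℕ) : ℚ) = ((n + (i:ℤ) - m : ℤ) : ℚ) by
                exact_mod_cast congrArg (Int.cast : ℤ → ℚ) (Int.toNat_of_nonneg h0)]
              push_cast; ring
            have e2 : q - (n:ℚ) - (i:ℚ) + ((n + (i:ℤ) - m).toNat:ℚ) + r = 0 := by
              rw [e1]; linarith
            have e3 : (i:ℚ) - ((n + (i:ℤ) - m).toNat:ℚ) - 1 - r = q - (n:ℚ) - 1 := by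
              rw [e1]; linarith
            have e4 : (n:ℤ) + (i:ℤ) - ((n + (i:ℤ) - m).toNat : ℤ) = m := by omega
            rw [e2, e3, hIOp0, one_mul, e4, ← hudef]
        · rw [if_neg h0]
          apply finsum_eq_zero_of_forall_eq_zero
          intro k
          have : q - (n:ℚ) - (i:ℚ) + (k:ℚ) + r ≠ 0 := by
            intro h
            have h1 : (k:ℚ) = (n:ℚ) + (i:ℚ) - (m:ℚ) := by push_cast; linarith
            have h2 : (k:ℤ) = n + (i:ℤ) - m := by exact_mod_cast h1
            omega
          rw [hIOpne _ this, zero_mul, smul_zero]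
      have hmain : (∑ᶠ i : ℕ,
          (cchoose y i * (-1 : ℂ) ^ i) •
            ((∑ᶠ k : ℕ, (cchoose ((n : ℂ) + (i : ℂ)) k * (-1 : ℂ) ^ k) •
                (A ((k : ℚ) - (n : ℚ) - 1 - r) * IOp (q - (k : ℚ) + r)))
              - (1:ℂ) • (∑ᶠ k : ℕ,
                  (cchoose ((n : ℂ) + (i : ℂ)) k * (-1 : ℂ) ^ ((n : ℤ) + (i : ℤ) - (k : ℤ))) •
                (IOp (q - (n : ℚ) - (i : ℚ) + (k : ℚ) + r) * A ((i : ℚ) - (k : ℚ) - 1 - r)))))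
          = ∑ᶠ i : ℕ, (cchoose y i * (-1:ℂ) ^ i * ((-1:ℂ) ^ (m:ℤ) *
              ((if 0 ≤ m then cchoose ((n:ℂ) + (i:ℂ)) m.toNat else 0)
                - (if 0 ≤ n + (i:ℤ) - m then cchoose ((n:ℂ) + (i:ℂ)) (n + (i:ℤ) - m).toNat else 0)))) • u := by
        apply finsum_congr
        intro i
        rw [one_smul, hS1 i, hS2 i]
        by_cases h1 : 0 ≤ m <;> by_cases h2 : 0 ≤ n + (i:ℤ) - m <;>
          simp only [if_pos, if_neg, h1, h2, if_true, if_false] <;> module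
      rw [hmain]
      have hcan : ∀ i : ℕ, 0 ≤ n + (i:ℤ) →
          ((if 0 ≤ m then cchoose ((n:ℂ) + (i:ℂ)) m.toNat else 0)
            - (if 0 ≤ n + (i:ℤ) - m then cchoose ((n:ℂ) + (i:ℂ)) (n + (i:ℤ) - m).toNat else 0))
            = 0 := by
        intro i hi
        have hx : (n:ℂ) + (i:ℂ) = (((n + (i:ℤ)).toNat : ℕ) : ℂ) := by
          have h' := congrArg (Int.cast : ℤ → ℂ) (Int.toNat_of_nonneg hi)
          push_cast at h'
          linear_combination -h'
        by_cases h1 : 0 ≤ m <;> by_cases h2 : 0 ≤ n + (i:ℤ) - m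
        · rw [if_pos h1, if_pos h2, hx, cchoose_nat, cchoose_nat]
          have e : (n + (i:ℤ) - m).toNat = (n + (i:ℤ)).toNat - m.toNat := by omega
          rw [e, Nat.choose_symm (by omega), sub_self]
        · rw [if_pos h1, if_neg h2, hx, cchoose_nat,
            Nat.choose_eq_zero_of_lt (by omega), Nat.cast_zero, sub_zero]
        · rw [if_neg h1, if_pos h2, hx, cchoose_nat,
            Nat.choose_eq_zero_of_lt (by omega), Nat.cast_zero, sub_zero]
        · rw [if_neg h1, if_neg h2, sub_zero]
      by_cases hn : n < 0
      · rw [if_pos hn]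
        set N : ℕ := (-n - 1).toNat with hNdef
        have hnN : n = -(N:ℤ) - 1 := by omega
        have hncast : (n:ℂ) = -(N:ℂ) - 1 := by
          have h' := congrArg (Int.cast : ℤ → ℂ) hnN
          push_cast at h'
          linear_combination h'
        have hqC : (q:ℂ) = (m:ℂ) - y := by
          have hm2 : q + (j:ℚ)/(T:ℚ) = (m:ℚ) := hm
          have h' := congrArg (Rat.cast : ℚ → ℂ) hm2
          push_cast at h'
          rw [hydef]
          linear_combination h'
        have hsupp : (Function.support fun i : ℕ => (cchoose y i * (-1:ℂ) ^ i * ((-1:ℂ) ^ (m:ℤ) *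
              ((if 0 ≤ m then cchoose ((n:ℂ) + (i:ℂ)) m.toNat else 0)
                - (if 0 ≤ n + (i:ℤ) - m then cchoose ((n:ℂ) + (i:ℂ)) (n + (i:ℤ) - m).toNat else 0)))) • u)
            ⊆ ↑(Finset.range (N + 1)) := by
          intro i hi
          simp only [Finset.coe_range, Set.mem_Iio]
          by_contra hge
          push_neg at hge
          apply hi
          simp only [hcan i (by omega), mul_zero, zero_smul]
        rw [finsum_eq_sum_of_support_subset _ hsupp, ← Finset.sum_smul]
        rcases le_or_gt 0 m with h1 | h1
        · -- m ≥ 0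
          have epow : ((-1:ℂ)) ^ (m:ℤ) = ((-1:ℂ)) ^ (m.toNat) := by
            conv_lhs => rw [← Int.toNat_of_nonneg h1]
            exact zpow_natCast _ _
          have hterm : ∀ i ∈ Finset.range (N + 1),
              cchoose y i * (-1:ℂ) ^ i * ((-1:ℂ) ^ (m:ℤ) *
                ((if 0 ≤ m then cchoose ((n:ℂ) + (i:ℂ)) m.toNat else 0)
                  - (if 0 ≤ n + (i:ℤ) - m then cchoose ((n:ℂ) + (i:ℂ)) (n + (i:ℤ) - m).toNat else 0)))
              = cchoose y i * (-1:ℂ) ^ i * ((-1:ℂ) ^ m.toNat * cchoose ((i:ℂ) - N - 1) m.toNat) := by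
            intro i hi
            have hiN : i ≤ N := Nat.lt_succ_iff.1 (Finset.mem_range.1 hi)
            rw [if_pos h1, if_neg (by omega : ¬ 0 ≤ n + (i:ℤ) - m), sub_zero, epow,
              show (n:ℂ) + (i:ℂ) = (i:ℂ) - (N:ℂ) - 1 by rw [hncast]; ring]
          rw [Finset.sum_congr rfl hterm, key1 y N m.toNat]
          congr 1
          have hmcast : ((m.toNat : ℕ) : ℂ) = (m:ℂ) := by
            exact_mod_cast congrArg (Int.cast : ℤ → ℂ) (Int.toNat_of_nonneg h1)
          rw [hqC, hncast, hmcast]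
          ring
        · -- m < 0
          set p : ℕ := (-m - 1).toNat with hpdef
          have hp : m = -(p:ℤ) - 1 := by omega
          have epow2 : ((-1:ℂ)) ^ (m:ℤ) = (-1:ℂ) ^ (p + 1) := by
            rw [show m = -(((p+1 : ℕ)):ℤ) by omega, zpow_neg, zpow_natCast]
            exact inv_eq_of_mul_eq_one_right (by rw [← pow_add]; exact Even.neg_one_pow ⟨p+1, rfl⟩)
          have hterm : ∀ i ∈ Finset.range (N + 1),
              cchoose y i * (-1:ℂ) ^ i * ((-1:ℂ) ^ (m:ℤ) *
                ((if 0 ≤ m then cchoose ((n:ℂ) + (i:ℂ)) m.toNat else 0)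
                  - (if 0 ≤ n + (i:ℤ) - m then cchoose ((n:ℂ) + (i:ℂ)) (n + (i:ℤ) - m).toNat else 0)))
              = cchoose y i * (-1:ℂ) ^ i *
                  (-(if N ≤ i + p then cchoose ((i:ℂ) - N - 1) (i + p - N) * (-1:ℂ) ^ (p+1) else 0)) := by
            intro i hi
            rw [if_neg (by omega : ¬ 0 ≤ m), zero_sub, epow2,
              show (n:ℂ) + (i:ℂ) = (i:ℂ) - (N:ℂ) - 1 by rw [hncast]; ring]
            by_cases hc : N ≤ i + p
            · rw [if_pos (by omega : 0 ≤ n + (i:ℤ) - m), if_pos hc,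
                show (n + (i:ℤ) - m).toNat = i + p - N by omega]
              ring
            · rw [if_neg (by omega : ¬ 0 ≤ n + (i:ℤ) - m), if_neg hc]
              ring
          rw [Finset.sum_congr rfl hterm, key2 y N p]
          congr 1
          have hpcast : (m:ℂ) = -(p:ℂ) - 1 := by
            have h' := congrArg (Int.cast : ℤ → ℂ) hp
            push_cast at h'
            linear_combination h'
          rw [hqC, hncast, hpcast]
          ring
      · rw [if_neg hn]
        apply finsum_eq_zero_of_forall_eq_zero
        intro i
        simp only [hcan i (by omega), mul_zero, zero_smul]
end
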